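/- arXiv:0806.3677 — 2 statements merged into one kernel-verified Lean document; each statement's English description precedes it below -/
import Mathlib

section
/- Let μ be a nonzero finite measure on ℕ with generating function g(x) = Σ_{a≥0} x^a μ(a). For every p, q > 0 and all sufficiently small x, y > 0, the unique analytic solution h(x,y) of the equation h(x,y) = y·g(p·x + q·h(x,y)) is given by h(x,y) = Σ_{a≥0} Σ_{m≥1} x^a y^m (1/m)·C(m+a-1, a)·q^{m-1}·p^a·μ^{*m}(m+a-1), where μ^{*m} is the m-th convolution power of μ and C(·,·) is a binomial coefficient. -/
/-!
Let `w k` be the coefficient of `Tᵏ` in `g (p x + q T)` and consider the walk on `ℕ` whose steps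
`k - 1` have weight `w k`. First-step decomposition shows that the generating function
`h(y) = ∑ₙ yⁿ fₙ` of the weights `fₙ` of first passage from `1` to `0` satisfies
`h = y ∑ₖ w k hᵏ = y g (p x + q h)`. Kemperman's hitting time theorem, the combinatorial form of
Lagrange inversion, gives `f_{m+1} = [T^m] (∑ₖ w k Tᵏ)^{m+1} / (m + 1)`, and expanding this
coefficient in `x` yields the double series of the theorem. All terms are nonnegative, so these
rearrangements are done in `ℝ≥0∞`; a geometric bound makes the series finite for small `x, y`.
Uniqueness holds because `z ↦ y g (p x + q z)` is a contraction near `0`.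
-/

/-- Convolution of two sequences. -/
def conv (f g : ℕ → ℝ) (n : ℕ) : ℝ := ∑ k ∈ Finset.range (n + 1), f k * g (n - k)

/-- `convPow f m` is the `m`-th convolution power of `f` (with `convPow f 0 = δ_0`). -/
def convPow (f : ℕ → ℝ) : ℕ → ℕ → ℝ
  | 0, n => if n = 0 then 1 else 0
  | m + 1, n => conv f (convPow f m) n

open Finset PowerSeries
open scoped ENNReal

namespace PowerSeries

variable {R : Type*} [CommSemiring R]

theorem coeff_X_mul_derivative (F : R⟦X⟧) (r : ℕ) :
    coeff r (X * d⁄dX R F) = r * coeff r F := by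
  cases r with
  | zero => simp
  | succ r =>
    rw [coeff_succ_X_mul, coeff_derivative, mul_comm]
    push_cast
    rfl

theorem natCast_mul_coeff_pow_succ (Φ : R⟦X⟧) (n r : ℕ) :
    (r : R) * coeff r (Φ ^ (n + 1)) =
      (n + 1) * ∑ ij ∈ antidiagonal r, (ij.1 : R) * coeff ij.1 Φ * coeff ij.2 (Φ ^ n) := by
  have hX : X * d⁄dX R (Φ ^ (n + 1)) = C ((n + 1 : ℕ) : R) * (X * d⁄dX R Φ * Φ ^ n) := by
    rw [derivative_pow, Nat.add_sub_cancel, map_natCast]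
    ring
  rw [← coeff_X_mul_derivative, hX, coeff_C_mul, coeff_mul, Nat.cast_succ]
  simp_rw [coeff_X_mul_derivative]

/-- `affineSubst p q F` is `F (p • X + q • T)`, written as a series in `T` whose coefficients are
series in `X`. -/
noncomputable def affineSubst (p q : R) (F : R⟦X⟧) : R⟦X⟧⟦X⟧ :=
  mk fun i => mk fun a => ((i + a).choose i : R) * p ^ a * q ^ i * coeff (i + a) F

variable (p q : R)

theorem coeff_coeff_affineSubst (F : R⟦X⟧) (i a : ℕ) :
    coeff a (coeff i (affineSubst p q F)) =
      ((i + a).choose i : R) * p ^ a * q ^ i * coeff (i + a) F := by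
  simp [affineSubst]

theorem affineSubst_one : affineSubst p q (1 : R⟦X⟧) = 1 := by
  ext i a
  rw [coeff_coeff_affineSubst, coeff_one]
  rcases Nat.eq_zero_or_pos i with rfl | hi
  · rcases Nat.eq_zero_or_pos a with rfl | ha
    · simp
    · simp [ha.ne', coeff_one]
  · simp [hi.ne']

theorem affineSubst_mul (F G : R⟦X⟧) :
    affineSubst p q (F * G) = affineSubst p q F * affineSubst p q G := by
  ext i a
  simp only [coeff_coeff_affineSubst, coeff_mul, map_sum, mul_sum]
  have vandermonde : ∀ st ∈ antidiagonal (i + a), ((i + a).choose i : R) =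
      ∑ ij ∈ antidiagonal i, ((st.1.choose ij.1 * st.2.choose ij.2 : ℕ) : R) := by
    intro st hst
    rw [← HasAntidiagonal.mem_antidiagonal.mp hst, Nat.add_choose_eq, Nat.cast_sum]
  rw [sum_congr rfl fun st hst => by rw [vandermonde st hst, sum_mul, sum_mul, sum_mul],
    sum_comm]
  refine sum_congr rfl fun ij hij => ?_
  rw [HasAntidiagonal.mem_antidiagonal] at hij
  symm
  -- reindex by `(a₁, a₂) ↦ (i₁ + a₁, i₂ + a₂)`; the terms missed have a vanishing binomial
  refine sum_of_injOn (fun ab => (ij.1 + ab.1, ij.2 + ab.2)) ?_ ?_ ?_ ?_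
  · intro ab _ cd _ h
    simp only [Prod.mk.injEq] at h
    ext <;> omega
  · intro ab hab
    simp only [mem_coe, HasAntidiagonal.mem_antidiagonal] at hab ⊢
    omega
  · intro st hst hnot
    have : st.1 < ij.1 ∨ st.2 < ij.2 := by
      by_contra! hle
      refine hnot ⟨(st.1 - ij.1, st.2 - ij.2), ?_, ?_⟩
      · simp only [mem_coe, HasAntidiagonal.mem_antidiagonal] at hst ⊢
        omega
      · ext <;> simp <;> omega
    rcases this with h | h <;> simp [Nat.choose_eq_zero_of_lt h]
  · intro ab hab
    rw [HasAntidiagonal.mem_antidiagonal] at hab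
    simp only [← hij, ← hab, Nat.cast_mul, pow_add]
    ring

theorem affineSubst_pow (F : R⟦X⟧) (n : ℕ) :
    affineSubst p q (F ^ n) = affineSubst p q F ^ n := by
  induction n with
  | zero => exact affineSubst_one p q
  | succ n ih => rw [pow_succ, affineSubst_mul, ih, pow_succ]

end PowerSeries

section FirstPassage

variable {R : Type*} [CommSemiring R] (φ : ℕ → R)

/-- Total weight of the walks on `ℕ` that go from `k` to `0` in `n` steps and reach `0` only at the
last step, where a step of size `i - 1` has weight `φ i`. -/
def firstPassage : ℕ → ℕ → R
  | 0, k => if k = 0 then 1 else 0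
  | _ + 1, 0 => 0
  | n + 1, k + 1 => ∑ i ∈ range (n + 1), φ i * firstPassage n (k + i)

theorem firstPassage_zero_left (k : ℕ) : firstPassage φ 0 k = if k = 0 then 1 else 0 := rfl

theorem firstPassage_zero_right (n : ℕ) : firstPassage φ n 0 = if n = 0 then 1 else 0 := by
  cases n <;> rfl

theorem firstPassage_eq_zero_of_lt {n k : ℕ} (h : n < k) : firstPassage φ n k = 0 := by
  induction n generalizing k with
  | zero => simp [firstPassage_zero_left, h.ne']
  | succ n ih =>
    obtain ⟨k, rfl⟩ := Nat.exists_eq_add_one_of_ne_zero (by omega : k ≠ 0)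
    exact sum_eq_zero fun i _ => by rw [ih (by omega), mul_zero]

theorem firstPassage_succ_succ {n N : ℕ} (k : ℕ) (hN : n + 1 ≤ N) :
    firstPassage φ (n + 1) (k + 1) = ∑ i ∈ range N, φ i * firstPassage φ n (k + i) := by
  refine sum_subset (range_subset_range.mpr hN) fun i _ hi => ?_
  rw [firstPassage_eq_zero_of_lt φ (by simp at hi; omega), mul_zero]

/-- Split a walk from `k + l` to `0` at its first visit to `l`. -/
theorem firstPassage_add (n k l : ℕ) :
    firstPassage φ n (k + l) =
      ∑ ij ∈ antidiagonal n, firstPassage φ ij.1 k * firstPassage φ ij.2 l := by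
  induction n generalizing k with
  | zero => cases k <;> simp [firstPassage_zero_left]
  | succ n ih =>
    cases k with
    | zero => simp [Nat.sum_antidiagonal_succ, firstPassage_zero_right]
    | succ k =>
      rw [Nat.sum_antidiagonal_succ, firstPassage_zero_left, if_neg k.succ_ne_zero, zero_mul,
        zero_add, show k + 1 + l = k + l + 1 by omega, firstPassage_succ_succ φ _ le_rfl]
      rw [sum_congr rfl fun i _ => by rw [add_right_comm, ih, mul_sum], sum_comm]
      refine sum_congr rfl fun ij hij => ?_
      rw [firstPassage_succ_succ φ k
        (by have := HasAntidiagonal.mem_antidiagonal.mp hij; omega : ij.1 + 1 ≤ n + 1), sum_mul]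
      exact sum_congr rfl fun i _ => (mul_assoc _ _ _).symm

end FirstPassage

section HittingTime

variable {R : Type*} [CommSemiring R] (φ : ℕ → R)

/-- Kemperman's hitting time theorem. -/
theorem natCast_mul_firstPassage [IsAddTorsionFree R] (k r : ℕ) :
    ((k + r : ℕ) : R) * firstPassage φ (k + r) k = k * coeff r (mk φ ^ (k + r)) := by
  suffices ∀ n k r : ℕ, k + r = n →
      (n : R) * firstPassage φ n k = k * coeff r (mk φ ^ n) from this _ k r rfl
  intro n
  induction n with
  | zero =>
    intro k r hkr
    obtain ⟨rfl, rfl⟩ : k = 0 ∧ r = 0 := by omega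
    simp
  | succ n ih =>
    rintro (_ | k) r hkr
    · simp [firstPassage_zero_right]
    rcases Nat.eq_zero_or_pos n with rfl | hn
    · obtain ⟨rfl, rfl⟩ : k = 0 ∧ r = 0 := by omega
      simp [firstPassage]
    set A := coeff r (mk φ ^ (n + 1))
    set B := ∑ ij ∈ antidiagonal r, (ij.1 : R) * φ ij.1 * coeff ij.2 (mk φ ^ n)
    have hA : A = ∑ ij ∈ antidiagonal r, φ ij.1 * coeff ij.2 (mk φ ^ n) := by
      simp [A, pow_succ', coeff_mul]
    have hB : (r : R) * A = (n + 1) * B := by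
      simpa using natCast_mul_coeff_pow_succ (mk φ) n r
    have hstep : (n : R) * firstPassage φ (n + 1) (k + 1) = k * A + B := by
      rw [firstPassage_succ_succ φ k le_rfl, mul_sum,
        ← sum_subset (range_subset_range.mpr (show r + 1 ≤ n + 1 by omega)) fun i _ hi => by
          rw [firstPassage_eq_zero_of_lt φ (by simp at hi; omega), mul_zero, mul_zero]]
      rw [hA, mul_sum, ← sum_add_distrib, Nat.sum_antidiagonal_eq_sum_range_succ_mk]
      refine sum_congr rfl fun i hi => ?_
      have := ih (k + i) (r - i) (by simp at hi; omega)
      rw [mul_left_comm, this]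
      push_cast
      ring
    apply IsAddTorsionFree.nsmul_right_injective hn.ne'
    simp only [nsmul_eq_mul]
    calc (n : R) * ((n + 1 : ℕ) * firstPassage φ (n + 1) (k + 1))
        = (n + 1) * (k * A) + r * A := by rw [mul_left_comm, hstep, hB]; push_cast; ring
      _ = n * ((k + 1 : ℕ) * A) := by
        obtain rfl : n = k + r := by omega
        push_cast
        ring

end HittingTime

instance : IsAddTorsionFree ℝ≥0∞ where
  nsmul_right_injective n hn a b h := by
    simpa [nsmul_eq_mul, ENNReal.mul_right_inj, hn] using h

theorem ENNReal.tsum_sum_antidiagonal (f : ℕ × ℕ → ℝ≥0∞) :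
    ∑' n, ∑ ij ∈ antidiagonal n, f ij = ∑' ij, f ij := by
  rw [← HasAntidiagonal.sigmaAntidiagonalEquivProd.tsum_eq f, ENNReal.tsum_sigma']
  exact tsum_congr fun n => by rw [tsum_fintype]; exact (sum_coe_sort _ _).symm

theorem ENNReal.tsum_mul_tsum_eq_tsum_sum_antidiagonal (f g : ℕ → ℝ≥0∞) :
    (∑' n, f n) * ∑' n, g n = ∑' n, ∑ ij ∈ antidiagonal n, f ij.1 * g ij.2 := by
  rw [ENNReal.tsum_sum_antidiagonal (fun ij => f ij.1 * g ij.2),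
    ENNReal.tsum_prod (f := fun i j => f i * g j), ← ENNReal.tsum_mul_right]
  exact tsum_congr fun i => ENNReal.tsum_mul_left.symm

namespace PowerSeries

noncomputable def evalENNReal (x : ℝ≥0∞) : ℝ≥0∞⟦X⟧ →+* ℝ≥0∞ where
  toFun F := ∑' n, coeff n F * x ^ n
  map_one' := by
    rw [tsum_eq_single 0 fun n hn => by simp [coeff_one, hn]]
    simp
  map_mul' F G := by
    rw [ENNReal.tsum_mul_tsum_eq_tsum_sum_antidiagonal]
    refine tsum_congr fun n => ?_
    rw [coeff_mul, sum_mul]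
    refine sum_congr rfl fun ij hij => ?_
    rw [← HasAntidiagonal.mem_antidiagonal.mp hij, pow_add]
    ring
  map_zero' := by simp
  map_add' F G := by simp [add_mul, ENNReal.tsum_add]

theorem evalENNReal_apply (x : ℝ≥0∞) (F : ℝ≥0∞⟦X⟧) :
    evalENNReal x F = ∑' n, coeff n F * x ^ n := rfl

theorem tsum_evalENNReal_coeff_affineSubst (p q x z : ℝ≥0∞) (F : ℝ≥0∞⟦X⟧) :
    ∑' k, evalENNReal x (coeff k (affineSubst p q F)) * z ^ k =
      ∑' n, coeff n F * (q * z + p * x) ^ n := by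
  simp_rw [evalENNReal_apply, coeff_coeff_affineSubst, ← ENNReal.tsum_mul_right,
    ← ENNReal.tsum_prod (f := fun k a => ((k + a).choose k : ℝ≥0∞) * p ^ a * q ^ k *
      coeff (k + a) F * x ^ a * z ^ k), ← ENNReal.tsum_sum_antidiagonal]
  refine tsum_congr fun n => ?_
  rw [(Commute.all _ _).add_pow', mul_sum]
  refine sum_congr rfl fun ka hka => ?_
  rw [HasAntidiagonal.mem_antidiagonal.mp hka, nsmul_eq_mul]
  ring

end PowerSeries

theorem ENNReal.tsum_ofReal_pow_le_two {u : ℝ} (hu : u ≤ 1 / 2) :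
    ∑' n, ENNReal.ofReal u ^ n ≤ 2 := by
  have hu' : ENNReal.ofReal u ≤ 2⁻¹ := by
    simpa [ENNReal.ofReal_inv_of_pos] using ENNReal.ofReal_le_ofReal (hu.trans_eq (one_div 2))
  rw [ENNReal.tsum_geometric, ← inv_inv (2 : ℝ≥0∞), ← ENNReal.one_sub_inv_two]
  exact ENNReal.inv_le_inv.mpr (tsub_le_tsub_left hu' 1)

theorem ENNReal.ofReal_tsum_tsum_of_nonneg {f : ℕ → ℕ → ℝ} (hf : ∀ a m, 0 ≤ f a m)
    (h : ∑' a, ∑' m, ENNReal.ofReal (f a m) ≠ ∞) :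
    ENNReal.ofReal (∑' a, ∑' m, f a m) = ∑' a, ∑' m, ENNReal.ofReal (f a m) := by
  have hinner (a : ℕ) : ∑' m, ENNReal.ofReal (f a m) ≠ ∞ :=
    ne_top_of_le_ne_top h (ENNReal.le_tsum a)
  rw [← ENNReal.ofReal_toReal h, ENNReal.tsum_toReal_eq hinner]
  congr 1
  refine tsum_congr fun a => ?_
  rw [ENNReal.tsum_toReal_eq fun _ => ENNReal.ofReal_ne_top]
  exact tsum_congr fun m => (ENNReal.toReal_ofReal (hf a m)).symm

section FirstPassageGeneratingFunction

variable (w : ℕ → ℝ≥0∞) (y : ℝ≥0∞)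

theorem tsum_firstPassage_one_pow (k : ℕ) :
    (∑' n, y ^ n * firstPassage w n 1) ^ k = ∑' n, y ^ n * firstPassage w n k := by
  induction k with
  | zero =>
    rw [pow_zero, tsum_eq_single 0 fun n hn => by simp [firstPassage_zero_right, hn]]
    simp [firstPassage_zero_left]
  | succ k ih =>
    rw [pow_succ, ih, ENNReal.tsum_mul_tsum_eq_tsum_sum_antidiagonal]
    refine tsum_congr fun n => ?_
    rw [firstPassage_add, mul_sum]
    refine sum_congr rfl fun ij hij => ?_
    rw [← HasAntidiagonal.mem_antidiagonal.mp hij, pow_add]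
    ring

theorem tsum_firstPassage_one_eq :
    ∑' n, y ^ n * firstPassage w n 1 =
      y * ∑' k, w k * (∑' n, y ^ n * firstPassage w n 1) ^ k := by
  have hfirstStep (n : ℕ) : ∑' k, w k * firstPassage w n k = firstPassage w (n + 1) 1 := by
    rw [tsum_eq_sum (s := range (n + 1)) fun k hk => by
      rw [firstPassage_eq_zero_of_lt w (by simpa using hk), mul_zero]]
    simp [firstPassage]
  simp_rw [tsum_firstPassage_one_pow, ← ENNReal.tsum_mul_left]
  rw [ENNReal.tsum_comm, tsum_eq_zero_add' ENNReal.summable]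
  simp only [firstPassage_zero_left, one_ne_zero, if_false, mul_zero, zero_add]
  refine tsum_congr fun n => ?_
  simp_rw [mul_left_comm _ (y ^ n), ENNReal.tsum_mul_left, hfirstStep, pow_succ]
  ring

end FirstPassageGeneratingFunction

section ConvPow

theorem convPow_succ (μ : ℕ → ℝ) (m t : ℕ) :
    convPow μ (m + 1) t = ∑ k ∈ range (t + 1), μ k * convPow μ m (t - k) := rfl

variable {μ : ℕ → ℝ} (hμ : ∀ a, 0 ≤ μ a)
include hμ

theorem convPow_nonneg (m t : ℕ) : 0 ≤ convPow μ m t := by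
  induction m generalizing t with
  | zero => simp only [convPow]; split_ifs <;> norm_num
  | succ m ih =>
    rw [convPow_succ]
    exact sum_nonneg fun k _ => mul_nonneg (hμ k) (ih (t - k))

theorem convPow_le_pow (hμs : Summable μ) (m t : ℕ) : convPow μ m t ≤ (∑' a, μ a) ^ m := by
  induction m generalizing t with
  | zero => simp only [convPow]; split_ifs <;> norm_num
  | succ m ih =>
    rw [convPow_succ]
    calc ∑ k ∈ range (t + 1), μ k * convPow μ m (t - k)
          ≤ ∑ k ∈ range (t + 1), μ k * (∑' a, μ a) ^ m :=
          sum_le_sum fun k _ => mul_le_mul_of_nonneg_left (ih (t - k)) (hμ k)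
      _ ≤ (∑' a, μ a) * (∑' a, μ a) ^ m := by
          rw [← sum_mul]
          exact mul_le_mul_of_nonneg_right (hμs.sum_le_tsum _ fun a _ => hμ a)
            (pow_nonneg (tsum_nonneg hμ) m)
      _ = (∑' a, μ a) ^ (m + 1) := (pow_succ' _ _).symm

theorem ofReal_convPow (m t : ℕ) :
    ENNReal.ofReal (convPow μ m t) = coeff t (mk (fun a => ENNReal.ofReal (μ a)) ^ m) := by
  induction m generalizing t with
  | zero => simp only [convPow, pow_zero, coeff_one]; split_ifs <;> simp
  | succ m ih =>
    rw [pow_succ', coeff_mul, Nat.sum_antidiagonal_eq_sum_range_succ_mk, convPow_succ,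
      ENNReal.ofReal_sum_of_nonneg fun k _ => mul_nonneg (hμ k) (convPow_nonneg hμ m _)]
    exact sum_congr rfl fun k _ => by rw [ENNReal.ofReal_mul (hμ k), ih, coeff_mk]

end ConvPow

theorem natCast_mul_half_pow_le_two (t : ℕ) : (t : ℝ) * (1 / 2) ^ (t - 1) ≤ 2 := by
  rcases t with _ | t
  · norm_num
  rw [Nat.add_sub_cancel, div_pow, one_pow, ← div_eq_mul_one_div, div_le_iff₀ (by positivity),
    ← pow_succ']
  exact_mod_cast Nat.lt_two_pow_self.le

section PowerSeriesOfMeasure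

variable {μ : ℕ → ℝ} (hμ : ∀ a, 0 ≤ μ a) (hμs : Summable μ)
include hμ hμs

theorem summable_pow_mul {u : ℝ} (hu0 : 0 ≤ u) (hu1 : u ≤ 1) :
    Summable fun t => u ^ t * μ t :=
  hμs.of_nonneg_of_le (fun t => mul_nonneg (pow_nonneg hu0 t) (hμ t))
    fun t => mul_le_of_le_one_left (hμ t) (pow_le_one₀ hu0 hu1)

theorem ofReal_tsum_pow_mul {u : ℝ} (hu0 : 0 ≤ u) (hu1 : u ≤ 1) :
    ENNReal.ofReal (∑' t, u ^ t * μ t) = ∑' t, ENNReal.ofReal (μ t) * ENNReal.ofReal u ^ t := by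
  rw [ENNReal.ofReal_tsum_of_nonneg (fun t => mul_nonneg (pow_nonneg hu0 t) (hμ t))
    (summable_pow_mul hμ hμs hu0 hu1)]
  exact tsum_congr fun t => by rw [ENNReal.ofReal_mul (pow_nonneg hu0 t), ENNReal.ofReal_pow hu0,
    mul_comm]

theorem abs_tsum_pow_mul_sub_le {u v : ℝ} (hu0 : 0 ≤ u) (hu : u ≤ 1 / 2) (hv0 : 0 ≤ v)
    (hv : v ≤ 1 / 2) :
    |∑' t, u ^ t * μ t - ∑' t, v ^ t * μ t| ≤ 2 * (∑' t, μ t) * |u - v| := by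
  rw [← (summable_pow_mul hμ hμs hu0 (by linarith)).tsum_sub
    (summable_pow_mul hμ hμs hv0 (by linarith)), ← Real.norm_eq_abs]
  refine (tsum_of_norm_bounded (hμs.hasSum.mul_left (2 * |u - v|)) fun t => ?_).trans_eq (by ring)
  rw [Real.norm_eq_abs, ← sub_mul, abs_mul, abs_of_nonneg (hμ t)]
  refine mul_le_mul_of_nonneg_right ?_ (hμ t)
  have hmax : max |u| |v| ≤ 1 / 2 := by
    rw [abs_of_nonneg hu0, abs_of_nonneg hv0]
    exact max_le hu hv
  calc |u ^ t - v ^ t| ≤ |u - v| * t * max |u| |v| ^ (t - 1) := abs_pow_sub_pow_le u v t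
    _ ≤ |u - v| * (t * (1 / 2) ^ (t - 1)) := by rw [mul_assoc]; gcongr
    _ ≤ 2 * |u - v| := by nlinarith [natCast_mul_half_pow_le_two t, abs_nonneg (u - v)]

theorem eq_of_eq_mul_tsum_pow_mul {c q y z s : ℝ} (hq : 0 ≤ q) (hy : 0 ≤ y)
    (hz0 : 0 ≤ c + q * z) (hz : c + q * z ≤ 1 / 2) (hs0 : 0 ≤ c + q * s) (hs : c + q * s ≤ 1 / 2)
    (hcontr : 2 * q * (∑' t, μ t) * y < 1)
    (hzfix : z = y * ∑' t, (c + q * z) ^ t * μ t) (hsfix : s = y * ∑' t, (c + q * s) ^ t * μ t) :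
    z = s := by
  have hlip := abs_tsum_pow_mul_sub_le hμ hμs hz0 hz hs0 hs
  have hle : |z - s| ≤ 2 * q * (∑' t, μ t) * y * |z - s| := by
    conv_lhs => rw [hzfix, hsfix, ← mul_sub, abs_mul, abs_of_nonneg hy]
    rw [show c + q * z - (c + q * s) = q * (z - s) by ring, abs_mul, abs_of_nonneg hq] at hlip
    nlinarith
  have : |z - s| ≤ 0 := by nlinarith [abs_nonneg (z - s)]
  exact sub_eq_zero.mp (abs_nonpos_iff.mp this)

end PowerSeriesOfMeasure

section LagrangeSeries

noncomputable def lagrangeTerm (μ : ℕ → ℝ) (p q x y : ℝ) (a m : ℕ) : ℝ :=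
  x ^ a * y ^ (m + 1) * (1 / (m + 1 : ℝ)) * (Nat.choose (m + a) a : ℝ) * q ^ m * p ^ a *
    convPow μ (m + 1) (m + a)

noncomputable def lagrangeSeries (μ : ℕ → ℝ) (p q x y : ℝ) : ℝ :=
  ∑' a, ∑' m, lagrangeTerm μ p q x y a m

/-- `stepWeight μ p q x k` is the coefficient of `Tᵏ` in `∑ₐ μ a (p x + q T)ᵃ`. -/
noncomputable def stepWeight (μ : ℕ → ℝ) (p q x : ℝ) (k : ℕ) : ℝ≥0∞ :=
  evalENNReal (ENNReal.ofReal x) <| coeff k <|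
    affineSubst (ENNReal.ofReal p) (ENNReal.ofReal q) (mk fun a => ENNReal.ofReal (μ a))

variable {μ : ℕ → ℝ} (hμ : ∀ a, 0 ≤ μ a) (hμs : Summable μ) {p q x y : ℝ} (hp : 0 ≤ p)
  (hq : 0 ≤ q) (hx : 0 ≤ x) (hy : 0 ≤ y)
include hμ hp hq hx hy

theorem lagrangeTerm_nonneg (a m : ℕ) : 0 ≤ lagrangeTerm μ p q x y a m := by
  have := convPow_nonneg hμ (m + 1) (m + a)
  unfold lagrangeTerm
  positivity

theorem tsum_tsum_ofReal_lagrangeTerm :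
    ∑' a, ∑' m, ENNReal.ofReal (lagrangeTerm μ p q x y a m) =
      ∑' n, ENNReal.ofReal y ^ n * firstPassage (stepWeight μ p q x) n 1 := by
  set F := mk fun a => ENNReal.ofReal (μ a)
  set W := affineSubst (ENNReal.ofReal p) (ENNReal.ofReal q) F
  have hw : mk (stepWeight μ p q x) = map (evalENNReal (ENNReal.ofReal x)) W := by
    ext k
    simp [stepWeight, W, F, coeff_map]
  have hfirstPassage (m : ℕ) : firstPassage (stepWeight μ p q x) (m + 1) 1 =
      (m + 1 : ℝ≥0∞)⁻¹ * evalENNReal (ENNReal.ofReal x) (coeff m (W ^ (m + 1))) := by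
    have := natCast_mul_firstPassage (stepWeight μ p q x) 1 m
    rw [add_comm 1 m, hw, ← map_pow, coeff_map, Nat.cast_one, one_mul] at this
    rw [← this, ← mul_assoc, Nat.cast_succ, ENNReal.inv_mul_cancel (by simp) (by simp), one_mul]
  rw [ENNReal.tsum_comm]
  conv_rhs => rw [tsum_eq_zero_add' ENNReal.summable]
  simp only [firstPassage_zero_left, one_ne_zero, if_false, mul_zero, zero_add]
  refine tsum_congr fun m => ?_
  rw [hfirstPassage, evalENNReal_apply, ← ENNReal.tsum_mul_left, ← ENNReal.tsum_mul_left]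
  refine tsum_congr fun a => ?_
  rw [← affineSubst_pow, coeff_coeff_affineSubst, ← ofReal_convPow hμ, Nat.choose_symm_add]
  unfold lagrangeTerm
  have := convPow_nonneg hμ (m + 1) (m + a)
  have hm : (0 : ℝ) < m + 1 := by positivity
  simp (disch := positivity) only [ENNReal.ofReal_mul, ENNReal.ofReal_pow, ENNReal.ofReal_natCast,
    one_div, ENNReal.ofReal_inv_of_pos hm, ENNReal.ofReal_add, ENNReal.ofReal_one]
  ring

include hμs

theorem lagrangeTerm_le (a m : ℕ) :
    lagrangeTerm μ p q x y a m ≤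
      y * (∑' t, μ t) * (2 * p * x) ^ a * (2 * q * (∑' t, μ t) * y) ^ m := by
  have hchoose : ((m + a).choose a : ℝ) ≤ 2 ^ (m + a) := by
    exact_mod_cast Nat.choose_le_two_pow (m + a) a
  have hinv : 1 / (m + 1 : ℝ) ≤ 1 := by
    rw [div_le_one (by positivity)]
    linarith [(Nat.cast_nonneg m : (0 : ℝ) ≤ m)]
  calc lagrangeTerm μ p q x y a m ≤ x ^ a * y ^ (m + 1) * 1 * 2 ^ (m + a) * q ^ m * p ^ a *
        (∑' t, μ t) ^ (m + 1) := by
        unfold lagrangeTerm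
        gcongr
        · exact convPow_nonneg hμ _ _
        · exact convPow_le_pow hμ hμs _ _
    _ = _ := by ring

theorem tsum_tsum_ofReal_lagrangeTerm_le (hpx : p * x ≤ 1 / 4)
    (hqy : q * (∑' t, μ t) * y ≤ 1 / 4) :
    ∑' a, ∑' m, ENNReal.ofReal (lagrangeTerm μ p q x y a m) ≤
      ENNReal.ofReal (4 * (y * ∑' t, μ t)) := by
  have hM : 0 ≤ ∑' t, μ t := tsum_nonneg hμ
  calc ∑' a, ∑' m, ENNReal.ofReal (lagrangeTerm μ p q x y a m)
      ≤ ∑' a, ∑' m, ENNReal.ofReal (y * ∑' t, μ t) * ENNReal.ofReal (2 * p * x) ^ a *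
          ENNReal.ofReal (2 * q * (∑' t, μ t) * y) ^ m := by
        gcongr with a m
        rw [← ENNReal.ofReal_pow (by positivity), ← ENNReal.ofReal_pow (by positivity),
          ← ENNReal.ofReal_mul (by positivity), ← ENNReal.ofReal_mul (by positivity)]
        exact ENNReal.ofReal_le_ofReal (lagrangeTerm_le hμ hμs hp hq hx hy a m)
    _ = ENNReal.ofReal (y * ∑' t, μ t) * (∑' a, ENNReal.ofReal (2 * p * x) ^ a) *
          ∑' m, ENNReal.ofReal (2 * q * (∑' t, μ t) * y) ^ m := by
        simp only [ENNReal.tsum_mul_left, ENNReal.tsum_mul_right]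
    _ ≤ ENNReal.ofReal (y * ∑' t, μ t) * 2 * 2 := by
        gcongr <;> exact ENNReal.tsum_ofReal_pow_le_two (by linarith)
    _ = ENNReal.ofReal (4 * (y * ∑' t, μ t)) := by
        rw [ENNReal.ofReal_mul (by norm_num : (0 : ℝ) ≤ 4), ENNReal.ofReal_ofNat]
        ring

theorem lagrangeSeries_eq_and_le (hpx : p * x ≤ 1 / 4) (hqy : q * (∑' t, μ t) * y ≤ 1 / 16) :
    lagrangeSeries μ p q x y =
        y * ∑' t, (p * x + q * lagrangeSeries μ p q x y) ^ t * μ t ∧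
      0 ≤ lagrangeSeries μ p q x y ∧ lagrangeSeries μ p q x y ≤ 4 * (y * ∑' t, μ t) := by
  set S := lagrangeSeries μ p q x y
  have hM : 0 ≤ ∑' t, μ t := tsum_nonneg hμ
  have hH := tsum_tsum_ofReal_lagrangeTerm hμ hp hq hx hy
  have hbound := tsum_tsum_ofReal_lagrangeTerm_le hμ hμs hp hq hx hy hpx (by linarith)
  have hS : ENNReal.ofReal S = ∑' a, ∑' m, ENNReal.ofReal (lagrangeTerm μ p q x y a m) :=
    ENNReal.ofReal_tsum_tsum_of_nonneg (lagrangeTerm_nonneg hμ hp hq hx hy)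
      (ne_top_of_le_ne_top ENNReal.ofReal_ne_top hbound)
  have hS0 : 0 ≤ S :=
    tsum_nonneg fun a => tsum_nonneg fun m => lagrangeTerm_nonneg hμ hp hq hx hy a m
  have hSle : S ≤ 4 * (y * ∑' t, μ t) :=
    (ENNReal.ofReal_le_ofReal_iff (by positivity)).mp (hS ▸ hbound)
  refine ⟨?_, hS0, hSle⟩
  have hu0 : 0 ≤ p * x + q * S := by positivity
  have hu1 : p * x + q * S ≤ 1 := by nlinarith
  have hg0 : 0 ≤ ∑' t, (p * x + q * S) ^ t * μ t :=
    tsum_nonneg fun t => mul_nonneg (pow_nonneg hu0 t) (hμ t)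
  rw [← ENNReal.ofReal_eq_ofReal_iff hS0 (mul_nonneg hy hg0), ENNReal.ofReal_mul hy,
    ofReal_tsum_pow_mul hμ hμs hu0 hu1, hS, hH, tsum_firstPassage_one_eq]
  simp only [stepWeight]
  rw [tsum_evalENNReal_coeff_affineSubst, ← hH, ← hS,
    ENNReal.ofReal_add (by positivity) (by positivity), ENNReal.ofReal_mul hp,
    ENNReal.ofReal_mul hq]
  simp_rw [coeff_mk, add_comm]

end LagrangeSeries

theorem stmt_6_general (μ : ℕ → ℝ) (hnn : ∀ a, 0 ≤ μ a) (hsum : Summable μ)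
    (g : ℝ → ℝ) (hg : ∀ x : ℝ, g x = ∑' a : ℕ, x ^ a * μ a)
    (p q : ℝ) (hp : 0 < p) (hq : 0 < q) :
    ∃ ε > (0 : ℝ), ∀ x y : ℝ, 0 < x → x < ε → 0 < y → y < ε →
      (∑' a : ℕ, ∑' m : ℕ, x ^ a * y ^ (m + 1) * (1 / (m + 1 : ℝ)) *
          (Nat.choose (m + a) a : ℝ) * q ^ m * p ^ a * convPow μ (m + 1) (m + a)) =
        y * g (p * x + q * (∑' a : ℕ, ∑' m : ℕ, x ^ a * y ^ (m + 1) *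
          (1 / (m + 1 : ℝ)) * (Nat.choose (m + a) a : ℝ) * q ^ m * p ^ a *
          convPow μ (m + 1) (m + a))) ∧
      ∀ z : ℝ, 0 ≤ z → z ≤ ε → z = y * g (p * x + q * z) →
        z = ∑' a : ℕ, ∑' m : ℕ, x ^ a * y ^ (m + 1) * (1 / (m + 1 : ℝ)) *
          (Nat.choose (m + a) a : ℝ) * q ^ m * p ^ a * convPow μ (m + 1) (m + a) := by
  set M := ∑' a, μ a
  have hM : 0 ≤ M := tsum_nonneg hnn
  refine ⟨min (1 / (4 * p)) (min (1 / (4 * q)) (1 / (16 * q * (M + 1)))), by positivity, ?_⟩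
  intro x y hx hxε hy hyε
  have hpx : p * x ≤ 1 / 4 := by
    have := (le_div_iff₀ (by positivity)).mp (hxε.trans_le (min_le_left _ _)).le
    linarith
  have hqy : q * M * y ≤ 1 / 16 := by
    have := (le_div_iff₀ (by positivity)).mp
      (hyε.trans_le ((min_le_right _ _).trans (min_le_right _ _))).le
    nlinarith [mul_pos hq hy]
  obtain ⟨hfix, hS0, hSle⟩ :=
    lagrangeSeries_eq_and_le hnn hsum hp.le hq.le hx.le hy.le hpx hqy
  refine ⟨by rw [hg]; exact hfix, fun z hz0 hzε hz => ?_⟩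
  have hqz : q * z ≤ 1 / 4 := by
    have := (le_div_iff₀ (by positivity)).mp
      (hzε.trans ((min_le_right _ _).trans (min_le_left _ _)))
    linarith
  have hqS := mul_le_mul_of_nonneg_left hSle hq.le
  rw [hg] at hz
  exact eq_of_eq_mul_tsum_pow_mul (s := lagrangeSeries μ p q x y) hnn hsum hq.le hy.le
    (by positivity) (by linarith) (add_nonneg (by positivity) (mul_nonneg hq.le hS0))
    (by nlinarith) (by nlinarith) hz hfix

theorem stmt_6 (μ : ℕ → ℝ) (hnn : ∀ a, 0 ≤ μ a) (hsum : Summable μ)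
    (hne : μ ≠ 0) (g : ℝ → ℝ) (hg : ∀ x : ℝ, g x = ∑' a : ℕ, x ^ a * μ a)
    (p q : ℝ) (hp : 0 < p) (hq : 0 < q) :
    ∃ ε > (0 : ℝ), ∀ x y : ℝ, 0 < x → x < ε → 0 < y → y < ε →
      (∑' a : ℕ, ∑' m : ℕ, x ^ a * y ^ (m + 1) * (1 / (m + 1 : ℝ)) *
          (Nat.choose (m + a) a : ℝ) * q ^ m * p ^ a * convPow μ (m + 1) (m + a)) =
        y * g (p * x + q * (∑' a : ℕ, ∑' m : ℕ, x ^ a * y ^ (m + 1) *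
          (1 / (m + 1 : ℝ)) * (Nat.choose (m + a) a : ℝ) * q ^ m * p ^ a *
          convPow μ (m + 1) (m + a))) ∧
      ∀ z : ℝ, 0 ≤ z → z ≤ ε → z = y * g (p * x + q * z) →
        z = ∑' a : ℕ, ∑' m : ℕ, x ^ a * y ^ (m + 1) * (1 / (m + 1 : ℝ)) *
          (Nat.choose (m + a) a : ℝ) * q ^ m * p ^ a * convPow μ (m + 1) (m + a) :=
  stmt_6_general μ hnn hsum g hg p q hp hq
end

section
/- If ν ≠ δ_1 is a probability measure on ℕ with mean M ≤ 1, then for every a ≥ 0, Σ_{n≥1} ((a+1)/n)·ν^{*n}(n-a-1) = 1, and consequently Σ_{m≥2} (1/(m-1))·ν^{*m}(m-2) = Σ_{a≥0} (1/(a+1))·ν(a). -/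
open Finset PowerSeries

lemma mk_conv (f g : ℕ → ℝ) : mk (conv f g) = mk f * mk g := by
  ext n
  rw [coeff_mul,
    Nat.sum_antidiagonal_eq_sum_range_succ (fun k l => coeff k (mk f) * coeff l (mk g))]
  simp [conv]

lemma mk_convPow (f : ℕ → ℝ) (m : ℕ) : mk (convPow f m) = mk f ^ m := by
  induction m with
  | zero => ext n; simp [convPow, coeff_one]
  | succ m ih => rw [pow_succ', ← ih, ← mk_conv]; rfl

lemma convPow_nonneg_s18 {f : ℕ → ℝ} (hf : ∀ n, 0 ≤ f n) (m n : ℕ) : 0 ≤ convPow f m n := by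
  induction m generalizing n with
  | zero => unfold convPow; positivity
  | succ m ih =>
    show 0 ≤ ∑ k ∈ range (n + 1), f k * convPow f m (n - k)
    exact sum_nonneg fun k _ => mul_nonneg (hf k) (ih _)

lemma coeff_X_mul_derivative (G : ℝ⟦X⟧) (m : ℕ) :
    coeff m (X * d⁄dX ℝ G) = m * coeff m G := by
  cases m with
  | zero => simp
  | succ m => rw [coeff_succ_X_mul, coeff_derivative]; push_cast; ring

lemma natCast_mul_convPow_succ (ν : ℕ → ℝ) (n m : ℕ) :
    (m : ℝ) * convPow ν (n + 1) m = (n + 1) * conv (fun k => k * ν k) (convPow ν n) m := by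
  have hmk : mk (fun k => (k : ℝ) * ν k) = X * d⁄dX ℝ (mk ν) := by
    ext k; rw [coeff_X_mul_derivative, coeff_mk, coeff_mk]
  rw [← coeff_mk m (convPow ν _), ← coeff_mk m (conv _ _), mk_conv, mk_convPow, mk_convPow,
    ← coeff_X_mul_derivative, Derivation.leibniz_pow, hmk, mul_smul_comm, map_nsmul, nsmul_eq_mul,
    add_tsub_cancel_right, smul_eq_mul, mul_left_comm, mul_comm (mk ν ^ n)]
  push_cast; ring

noncomputable def progeny (ν : ℕ → ℝ) (a n : ℕ) : ℝ :=
  if n = 0 then (if a = 0 then 1 else 0)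
  else if a ≤ n then a / n * convPow ν n (n - a) else 0

lemma progeny_zero_right (ν : ℕ → ℝ) (a : ℕ) : progeny ν a 0 = if a = 0 then 1 else 0 := by
  simp [progeny]

lemma progeny_zero_left (ν : ℕ → ℝ) (n : ℕ) : progeny ν 0 n = if n = 0 then 1 else 0 := by
  by_cases hn : n = 0 <;> simp [progeny, hn]

lemma progeny_of_lt (ν : ℕ → ℝ) {a n : ℕ} (h : n < a) : progeny ν a n = 0 := by
  unfold progeny; split_ifs <;> first | rfl | omega

lemma progeny_of_ne_zero (ν : ℕ → ℝ) {a n : ℕ} (hn : n ≠ 0) (ha : a ≤ n) :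
    progeny ν a n = a / n * convPow ν n (n - a) := by
  simp [progeny, hn, ha]

lemma progeny_succ_succ_of_le (ν : ℕ → ℝ) {a n : ℕ} (h : a ≤ n) :
    progeny ν (a + 1) (n + 1) = (a + 1) / (n + 1) * convPow ν (n + 1) (n - a) := by
  rw [progeny_of_ne_zero ν n.succ_ne_zero (by omega), show n + 1 - (a + 1) = n - a by omega]
  push_cast; rfl

lemma progeny_nonneg {ν : ℕ → ℝ} (hnn : ∀ k, 0 ≤ ν k) (a n : ℕ) : 0 ≤ progeny ν a n := by
  unfold progeny
  have := convPow_nonneg_s18 hnn n (n - a)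
  split_ifs <;> positivity

lemma progeny_succ_succ (ν : ℕ → ℝ) (b : ℕ) {n N : ℕ} (hN : n < N) :
    progeny ν (b + 1) (n + 1) = ∑ k ∈ range N, ν k * progeny ν (b + k) n := by
  rcases Nat.eq_zero_or_pos n with rfl | hn
  · rw [sum_eq_single 0 (fun k _ hk => by rw [progeny_zero_right, if_neg (by omega), mul_zero])
      (by simp; omega)]
    rcases Nat.eq_zero_or_pos b with rfl | hb
    · simp [progeny, convPow, conv]
    · rw [progeny_of_lt ν (by omega), progeny_zero_right, if_neg (by omega), mul_zero]
  rcases lt_or_ge n b with hbn | hbn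
  · rw [progeny_of_lt ν (by omega), eq_comm]
    exact sum_eq_zero fun k _ => by rw [progeny_of_lt ν (by omega), mul_zero]
  obtain ⟨m, rfl⟩ := Nat.exists_eq_add_of_le hbn
  have hterms : ∑ k ∈ range N, ν k * progeny ν (b + k) (b + m)
      = ((b + m : ℕ) : ℝ)⁻¹ * conv (fun k => (b + k) * ν k) (convPow ν (b + m)) m := by
    rw [conv, mul_sum, ← sum_range_add_sum_Ico _ (show m + 1 ≤ N by omega),
      sum_eq_zero (s := Ico _ _) fun k hk => by
        rw [progeny_of_lt ν (by simp at hk; omega), mul_zero], add_zero]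
    refine sum_congr rfl fun k hk => ?_
    rw [progeny_of_ne_zero ν (by omega) (by simp at hk; omega),
      show b + m - (b + k) = m - k by omega]
    push_cast; ring
  have hsplit : conv (fun k => (b + k) * ν k) (convPow ν (b + m)) m
      = b * convPow ν (b + m + 1) m + conv (fun k => k * ν k) (convPow ν (b + m)) m := by
    simp only [conv, mul_sum, ← sum_add_distrib, convPow]
    exact sum_congr rfl fun k _ => by ring
  have hderiv := natCast_mul_convPow_succ ν (b + m) m
  rw [hterms, hsplit, progeny_of_ne_zero ν (by omega) (by omega),
    show b + m + 1 - (b + 1) = m by omega]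
  -- `(b + m) (b + 1) = (b + m + 1) b + m`
  field_simp
  push_cast at hderiv ⊢
  linear_combination hderiv

lemma conv_progeny_zero_left (ν g : ℕ → ℝ) (n : ℕ) : conv (progeny ν 0) g n = g n := by
  rw [conv, sum_eq_single 0 (fun k _ hk => by rw [progeny_zero_left, if_neg hk, zero_mul])
    (by simp)]
  simp [progeny_zero_left]

lemma progeny_add (ν : ℕ → ℝ) (a b n : ℕ) :
    progeny ν (a + b) n = conv (progeny ν a) (progeny ν b) n := by
  induction n generalizing a with
  | zero =>
    simp only [conv, zero_add, range_one, sum_singleton, Nat.sub_self, progeny_zero_right,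
      Nat.add_eq_zero_iff]
    split_ifs <;> simp_all
  | succ n ih =>
    rcases a with _ | c
    · rw [zero_add, conv_progeny_zero_left]
    calc progeny ν (c + 1 + b) (n + 1)
        = ∑ k ∈ range (n + 2), ν k * conv (progeny ν (c + k)) (progeny ν b) n := by
          rw [show c + 1 + b = c + b + 1 by omega, progeny_succ_succ ν _ (by omega : n < n + 2)]
          exact sum_congr rfl fun k _ => by rw [← ih, show c + k + b = c + b + k by omega]
      _ = ∑ j ∈ range (n + 1), progeny ν (c + 1) (j + 1) * progeny ν b (n - j) := by
          simp only [conv, mul_sum]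
          rw [sum_comm]
          refine sum_congr rfl fun j hj => ?_
          rw [progeny_succ_succ ν c (show j < n + 2 by simp at hj; omega), sum_mul]
          exact sum_congr rfl fun k _ => by ring
      _ = conv (progeny ν (c + 1)) (progeny ν b) (n + 1) := by
          rw [conv, sum_range_succ' (fun j => progeny ν (c + 1) j * progeny ν b (n + 1 - j)),
            progeny_of_lt ν (by omega : 0 < c + 1), zero_mul, add_zero]
          simp only [Nat.add_sub_add_right]

lemma sum_range_progeny_le_one {ν : ℕ → ℝ} (hnn : ∀ k, 0 ≤ ν k) (hν : HasSum ν 1) (N a : ℕ) :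
    ∑ n ∈ range N, progeny ν a n ≤ 1 := by
  induction N generalizing a with
  | zero => simp
  | succ N ih =>
    rcases a with _ | c
    · rw [sum_eq_single 0 (fun n _ hn => by rw [progeny_zero_left, if_neg hn]) (by simp)]
      simp [progeny_zero_left]
    calc ∑ n ∈ range (N + 1), progeny ν (c + 1) n
        = ∑ n ∈ range N, ∑ k ∈ range (N + 1), ν k * progeny ν (c + k) n := by
          rw [sum_range_succ', progeny_of_lt ν (by omega : 0 < c + 1), add_zero]
          exact sum_congr rfl fun n hn => progeny_succ_succ ν c (by simp at hn; omega)
      _ = ∑ k ∈ range (N + 1), ν k * ∑ n ∈ range N, progeny ν (c + k) n := by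
          rw [sum_comm]; simp only [mul_sum]
      _ ≤ ∑ k ∈ range (N + 1), ν k :=
          sum_le_sum fun k _ => mul_le_of_le_one_right (hnn k) (ih _)
      _ ≤ 1 := sum_le_hasSum _ (fun k _ => hnn k) hν

lemma summable_progeny {ν : ℕ → ℝ} (hnn : ∀ k, 0 ≤ ν k) (hν : HasSum ν 1) (a : ℕ) :
    Summable (progeny ν a) :=
  summable_of_sum_range_le (progeny_nonneg hnn a) (sum_range_progeny_le_one hnn hν · a)

lemma tsum_progeny_le_one {ν : ℕ → ℝ} (hnn : ∀ k, 0 ≤ ν k) (hν : HasSum ν 1) (a : ℕ) :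
    ∑' n, progeny ν a n ≤ 1 :=
  Real.tsum_le_of_sum_range_le (progeny_nonneg hnn a) (sum_range_progeny_le_one hnn hν · a)

lemma tsum_progeny_eq_pow {ν : ℕ → ℝ} (hnn : ∀ k, 0 ≤ ν k) (hν : HasSum ν 1) (a : ℕ) :
    ∑' n, progeny ν a n = (∑' n, progeny ν 1 n) ^ a := by
  induction a with
  | zero => simp [progeny_zero_left]
  | succ a ih =>
    have h0 := progeny_nonneg hnn
    rw [pow_succ, ← ih, (summable_progeny hnn hν a).tsum_mul_tsum_eq_tsum_sum_range
      (summable_progeny hnn hν 1) ((summable_progeny hnn hν a).mul_of_nonneg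
        (summable_progeny hnn hν 1) (h0 a) (h0 1))]
    exact tsum_congr (progeny_add ν a 1)

lemma tsum_comm_of_nonneg {α β : Type*} {G : α → β → ℝ} (h0 : ∀ a b, 0 ≤ G a b)
    (hrow : ∀ a, Summable (G a)) (hsum : Summable fun a => ∑' b, G a b) :
    ∑' b, ∑' a, G a b = ∑' a, ∑' b, G a b :=
  ((summable_prod_of_nonneg fun p => h0 p.1 p.2).2 ⟨hrow, hsum⟩).tsum_comm

lemma tsum_progeny_one_eq {ν : ℕ → ℝ} (hnn : ∀ k, 0 ≤ ν k) (hν : HasSum ν 1) :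
    ∑' n, progeny ν 1 n = ∑' k, ν k * (∑' n, progeny ν 1 n) ^ k := by
  have hrec (n : ℕ) : progeny ν 1 (n + 1) = ∑' k, ν k * progeny ν k n := by
    rw [tsum_eq_sum (s := range (n + 1)) fun k hk => by
      rw [progeny_of_lt ν (by simp at hk; omega), mul_zero]]
    simpa using progeny_succ_succ ν 0 (Nat.lt_succ_self n)
  have hrowsum : Summable fun k => ∑' n, ν k * progeny ν k n := by
    refine hν.summable.of_nonneg_of_le (fun k => tsum_nonneg fun n => ?_) fun k => ?_
    · exact mul_nonneg (hnn k) (progeny_nonneg hnn k n)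
    · rw [tsum_mul_left]
      exact mul_le_of_le_one_right (hnn k) (tsum_progeny_le_one hnn hν k)
  calc ∑' n, progeny ν 1 n = ∑' n, progeny ν 1 (n + 1) := by
        rw [(summable_progeny hnn hν 1).tsum_eq_zero_add, progeny_of_lt ν zero_lt_one, zero_add]
    _ = ∑' n, ∑' k, ν k * progeny ν k n := tsum_congr hrec
    _ = ∑' k, ∑' n, ν k * progeny ν k n :=
        tsum_comm_of_nonneg (fun k n => mul_nonneg (hnn k) (progeny_nonneg hnn k n))
          (fun k => (summable_progeny hnn hν k).mul_left _) hrowsum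
    _ = ∑' k, ν k * (∑' n, progeny ν 1 n) ^ k :=
        tsum_congr fun k => by rw [tsum_mul_left, tsum_progeny_eq_pow hnn hν]

lemma eq_one_of_eq_tsum_mul_pow {ν : ℕ → ℝ} (hnn : ∀ k, 0 ≤ ν k) (hν : HasSum ν 1)
    (hne : ν ≠ fun a => if a = 1 then 1 else 0)
    (hsummean : Summable fun a : ℕ => (a : ℝ) * ν a) (hM : ∑' a : ℕ, (a : ℝ) * ν a ≤ 1)
    {s : ℝ} (hs0 : 0 ≤ s) (hs1 : s ≤ 1) (hfix : s = ∑' k, ν k * s ^ k) : s = 1 := by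
  by_contra hs
  have hlt : s < 1 := lt_of_le_of_ne hs1 hs
  by_cases hbig : ∃ k, 2 ≤ k ∧ 0 < ν k
  · obtain ⟨k₀, hk₀, hνk₀⟩ := hbig
    have hbern (k : ℕ) : 1 + k * (s - 1) ≤ s ^ k := by
      simpa using one_add_mul_le_pow (a := s - 1) (by linarith) k
    have hbern_strict : 1 + k₀ * (s - 1) < s ^ k₀ := by
      simpa using one_add_mul_self_lt_rpow_one_add (s := s - 1) (by linarith) (by linarith)
        (p := k₀) (by exact_mod_cast hk₀)
    have hlin : HasSum (fun k => ν k * (1 + k * (s - 1))) (1 + (∑' a : ℕ, a * ν a) * (s - 1)) :=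
      (hν.add (hsummean.hasSum.mul_right (s - 1))).congr_fun fun k => by ring
    have hpow : Summable fun k => ν k * s ^ k :=
      hν.summable.of_nonneg_of_le (fun k => mul_nonneg (hnn k) (pow_nonneg hs0 k))
        fun k => mul_le_of_le_one_right (hnn k) (pow_le_one₀ hs0 hs1)
    have hsum_lt := hlin.summable.tsum_lt_tsum
      (fun k => mul_le_mul_of_nonneg_left (hbern k) (hnn k))
      (mul_lt_mul_of_pos_left hbern_strict hνk₀) hpow
    rw [hlin.tsum_eq, ← hfix] at hsum_lt
    nlinarith
  · push Not at hbig
    have hzero (k : ℕ) (hk : k ∉ range 2) : ν k = 0 :=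
      le_antisymm (hbig k (by simp at hk; omega)) (hnn k)
    have h01 : ν 0 + ν 1 = 1 := by
      simpa [sum_range_succ] using (hasSum_sum_of_ne_finset_zero hzero).unique hν
    have hs' : s = ν 0 + ν 1 * s := by
      conv_lhs => rw [hfix, tsum_eq_sum fun k hk => by rw [hzero k hk, zero_mul]]
      simp [sum_range_succ]
    have hν1 : ν 1 = 1 := by
      have h : (1 - ν 1) * (s - 1) = 0 := by linear_combination hs' + h01
      rcases mul_eq_zero.1 h with h | h
      · linarith
      · exact absurd (by linarith) hs
    refine hne (funext fun k => ?_)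
    rcases k with _ | _ | k
    · rw [if_neg zero_ne_one]; linarith
    · simpa using hν1
    · simpa using hzero (k + 2) (by simp)

lemma tsum_progeny_eq_one {ν : ℕ → ℝ} (hnn : ∀ k, 0 ≤ ν k) (hν : HasSum ν 1)
    (hne : ν ≠ fun a => if a = 1 then 1 else 0)
    (hsummean : Summable fun a : ℕ => (a : ℝ) * ν a) (hM : ∑' a : ℕ, (a : ℝ) * ν a ≤ 1)
    (a : ℕ) : ∑' n, progeny ν a n = 1 := by
  rw [tsum_progeny_eq_pow hnn hν, eq_one_of_eq_tsum_mul_pow hnn hν hne hsummean hM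
    (tsum_nonneg (progeny_nonneg hnn 1)) (tsum_progeny_le_one hnn hν 1)
    (tsum_progeny_one_eq hnn hν), one_pow]

lemma tsum_inv_succ_mul_convPow_add_two {ν : ℕ → ℝ} (hnn : ∀ k, 0 ≤ ν k) (hν : HasSum ν 1)
    (hproper : ∀ a, ∑' n, progeny ν (a + 1) (n + 1) = 1) :
    ∑' m : ℕ, ((m : ℝ) + 1)⁻¹ * convPow ν (m + 2) m = ∑' a : ℕ, ((a : ℝ) + 1)⁻¹ * ν a := by
  have hterm (m : ℕ) : ((m : ℝ) + 1)⁻¹ * convPow ν (m + 2) m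
      = ∑' a : ℕ, ((a : ℝ) + 1)⁻¹ * ν a * progeny ν (a + 1) (m + 1) := by
    rw [tsum_eq_sum (s := range (m + 1)) fun a ha => by
      rw [progeny_of_lt ν (by simp at ha; omega), mul_zero]]
    rw [show convPow ν (m + 2) m = ∑ a ∈ range (m + 1), ν a * convPow ν (m + 1) (m - a) from rfl,
      mul_sum]
    refine sum_congr rfl fun a ha => ?_
    rw [progeny_succ_succ_of_le ν (by simp at ha; omega)]
    field_simp
  have hweight : Summable fun a : ℕ => ((a : ℝ) + 1)⁻¹ * ν a :=
    hν.summable.of_nonneg_of_le (fun a => by have := hnn a; positivity)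
      fun a => mul_le_of_le_one_left (hnn a) (inv_le_one_of_one_le₀ (by simp))
  calc ∑' m : ℕ, ((m : ℝ) + 1)⁻¹ * convPow ν (m + 2) m
      = ∑' (m : ℕ) (a : ℕ), ((a : ℝ) + 1)⁻¹ * ν a * progeny ν (a + 1) (m + 1) := tsum_congr hterm
    _ = ∑' (a : ℕ) (m : ℕ), ((a : ℝ) + 1)⁻¹ * ν a * progeny ν (a + 1) (m + 1) :=
        tsum_comm_of_nonneg
          (fun a m => mul_nonneg (by have := hnn a; positivity) (progeny_nonneg hnn _ _))
          (fun a => ((summable_nat_add_iff 1).2 (summable_progeny hnn hν (a + 1))).mul_left _)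
          (hweight.congr fun a => by rw [tsum_mul_left, hproper, mul_one])
    _ = ∑' a : ℕ, ((a : ℝ) + 1)⁻¹ * ν a :=
        tsum_congr fun a => by rw [tsum_mul_left, hproper, mul_one]

theorem stmt_18 (ν : ℕ → ℝ) (hnn : ∀ a, 0 ≤ ν a) (hprob : ∑' a : ℕ, ν a = 1)
    (hne : ν ≠ fun a => if a = 1 then 1 else 0)
    (hsummean : Summable fun a : ℕ => (a : ℝ) * ν a)
    (hM : ∑' a : ℕ, (a : ℝ) * ν a ≤ 1) :
    (∀ a : ℕ, ∑' n : ℕ,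
        (((a : ℝ) + 1) / ((n : ℝ) + 1)) *
          (if a ≤ n then convPow ν (n + 1) (n - a) else 0) = 1) ∧
    ∑' m : ℕ, ((m : ℝ) + 1)⁻¹ * convPow ν (m + 2) m =
      ∑' a : ℕ, ((a : ℝ) + 1)⁻¹ * ν a := by
  have hν : HasSum ν 1 := by
    refine hprob ▸ (Summable.hasSum ?_)
    by_contra h
    exact zero_ne_one ((tsum_eq_zero_of_not_summable h).symm.trans hprob)
  have hproper (a : ℕ) : ∑' n, progeny ν (a + 1) (n + 1) = 1 := by
    rw [← tsum_progeny_eq_one hnn hν hne hsummean hM (a + 1),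
      (summable_progeny hnn hν _).tsum_eq_zero_add, progeny_of_lt ν a.succ_pos, zero_add]
  refine ⟨fun a => ?_, tsum_inv_succ_mul_convPow_add_two hnn hν hproper⟩
  refine (tsum_congr fun n => ?_).trans (hproper a)
  split_ifs with h
  · rw [progeny_succ_succ_of_le ν h]
  · rw [mul_zero, progeny_of_lt ν (by omega)]
end
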